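/- Let V = b(e₂ + e₃) with b ≠ 0. Then V defines a harmonic map (i.e., ∇*∇V = 0 and Σ_{i=1}^{4} εᵢ R(∇_{eᵢ}V, V)eᵢ = 0) if and only if A = ((−3+√13)/2)·B or A = ((−3−√13)/2)·B (equivalently, B² = A² + 3AB). -/

import Mathlib

/-!
Because the metric is diagonal in `e`, the Koszul formula determines `∇_{eᵢ} eⱼ` from the
brackets; its only `B`-terms are `∇_{e₄} e₂ = -B e₃` and `∇_{e₄} e₃ = -B e₂`. With these,
the curvature term vanishes identically for `V = b (e₂ + e₃)`, while
`∇*∇V = b (B² - 3AB - A²) (e₂ + e₃)`. So `V` is harmonic iff `A² + 3AB - B² = 0`, a quadratic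
in `A` with discriminant `13 B²`.
-/

open Module

section DiagonalForm

variable {ι K M : Type*} [Fintype ι] [DecidableEq ι] [Field K] [AddCommGroup M] [Module K M]

theorem Module.Basis.apply_basis_eq_mul_repr_of_diagonal (e : Basis ι K M)
    (g : M →ₗ[K] M →ₗ[K] K)
    {s : ι → K} (hg : ∀ i j, g (e i) (e j) = if i = j then s i else 0) (X : M) (k : ι) :
    g X (e k) = s k * e.repr X k :=
  calc g X (e k) = ∑ i, e.repr X i * g (e i) (e k) := by
        conv_lhs => rw [← e.sum_repr X]
        simp only [map_sum, map_smul, LinearMap.coe_sum, Finset.sum_apply, LinearMap.smul_apply,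
          smul_eq_mul]
    _ = s k * e.repr X k := by simp [hg, mul_comm]

theorem Module.Basis.ext_of_diagonal (e : Basis ι K M) (g : M →ₗ[K] M →ₗ[K] K)
    {s : ι → K} (hs : ∀ i, s i ≠ 0) (hg : ∀ i j, g (e i) (e j) = if i = j then s i else 0)
    {X Y : M} (h : ∀ k, g X (e k) = g Y (e k)) : X = Y := by
  refine e.ext_elem fun k => ?_
  have := h k
  rwa [e.apply_basis_eq_mul_repr_of_diagonal g hg, e.apply_basis_eq_mul_repr_of_diagonal g hg,
    mul_right_inj' (hs k)] at this

theorem Module.Basis.eq_of_koszul_formula (e : Basis ι K M) (g : M →ₗ[K] M →ₗ[K] K)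
    {s : ι → K} (hs : ∀ i, s i ≠ 0) (hg : ∀ i j, g (e i) (e j) = if i = j then s i else 0)
    (lie nabla : M →ₗ[K] M →ₗ[K] M) [NeZero (2 : K)]
    (hK : ∀ X Y Z, 2 * g (nabla X Y) Z = g (lie X Y) Z - g (lie Y Z) X + g (lie Z X) Y)
    {X Y W : M}
    (hW : ∀ k, g (lie X Y) (e k) - g (lie Y (e k)) X + g (lie (e k) X) Y = 2 * g W (e k)) :
    nabla X Y = W :=
  e.ext_of_diagonal g hs hg fun k => by
    refine mul_left_cancel₀ two_ne_zero ?_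
    rw [hK, hW k]

end DiagonalForm

theorem sq_sub_three_mul_sub_sq_eq_zero_iff (A B : ℝ) :
    B ^ 2 - 3 * A * B - A ^ 2 = 0 ↔
      A = ((-3 + √13) / 2) * B ∨ A = ((-3 - √13) / 2) * B := by
  have hdiscrim : discrim 1 (3 * B) (-B ^ 2) = (√13 * B) * (√13 * B) := by
    rw [discrim, mul_mul_mul_comm, Real.mul_self_sqrt (by norm_num)]
    ring
  rw [show B ^ 2 - 3 * A * B - A ^ 2 = -(1 * (A * A) + 3 * B * A + -B ^ 2) by ring, neg_eq_zero,
    quadratic_eq_zero_iff one_ne_zero hdiscrim A,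
    show (-(3 * B) + √13 * B) / (2 * 1) = ((-3 + √13) / 2) * B by ring,
    show (-(3 * B) - √13 * B) / (2 * 1) = ((-3 - √13) / 2) * B by ring]

section LorentzianExample

variable {G : Type*} [AddCommGroup G] [Module ℝ G]

/-- `lorentzSign i` is `εᵢ`; index `2 : Fin 4` stands for the timelike `e₃`. -/
def lorentzSign (i : Fin 4) : ℝ := if i = 2 then -1 else 1

theorem lorentzSign_ne_zero (i : Fin 4) : lorentzSign i ≠ 0 := by
  unfold lorentzSign
  split_ifs <;> norm_num

def roughLaplacian {ι : Type*} [Fintype ι] (ε : ι → ℝ) (e : ι → G)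
    (nabla : G →ₗ[ℝ] G →ₗ[ℝ] G) (V : G) : G :=
  ∑ i, ε i • (nabla (e i) (nabla (e i) V) - nabla (nabla (e i) (e i)) V)

/-- `∑ εᵢ R(∇_{eᵢ}V, V) eᵢ` with `R(X,Y)Z = ∇_{[X,Y]}Z - ∇_X ∇_Y Z + ∇_Y ∇_X Z`. -/
def curvatureTrace {ι : Type*} [Fintype ι] (ε : ι → ℝ) (e : ι → G)
    (lie nabla : G →ₗ[ℝ] G →ₗ[ℝ] G) (V : G) : G :=
  ∑ i, ε i • (nabla (lie (nabla (e i) V) V) (e i) - nabla (nabla (e i) V) (nabla V (e i))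
    + nabla V (nabla (nabla (e i) V) (e i)))

def bracketTable (A B : ℝ) (e : Fin 4 → G) : Fin 4 → Fin 4 → G :=
  ![![0, 0, 0, A • e 0],
    ![0, 0, 0, A • e 1 + B • e 2],
    ![0, 0, 0, B • e 1 + A • e 2],
    ![-(A • e 0), -(A • e 1 + B • e 2), -(B • e 1 + A • e 2), 0]]

def connectionTable (A B : ℝ) (e : Fin 4 → G) : Fin 4 → Fin 4 → G :=
  ![![-(A • e 3), 0, 0, A • e 0],
    ![0, -(A • e 3), 0, A • e 1],
    ![0, 0, A • e 3, A • e 2],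
    ![0, -(B • e 2), -(B • e 1), 0]]

theorem lie_basis_eq_bracketTable (e : Fin 4 → G) (lie : G →ₗ[ℝ] G →ₗ[ℝ] G) (A B : ℝ)
    (hanti : ∀ X Y : G, lie X Y = - lie Y X)
    (h12 : lie (e 0) (e 1) = 0)
    (h13 : lie (e 0) (e 2) = 0)
    (h14 : lie (e 0) (e 3) = A • e 0)
    (h23 : lie (e 1) (e 2) = 0)
    (h24 : lie (e 1) (e 3) = A • e 1 + B • e 2)
    (h34 : lie (e 2) (e 3) = B • e 1 + A • e 2) (i j : Fin 4) :
    lie (e i) (e j) = bracketTable A B e i j := by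
  have := IsAddTorsionFree.of_isTorsionFree ℝ G
  have lie_self (X : G) : lie X X = 0 := self_eq_neg.mp (hanti X X)
  fin_cases i <;> fin_cases j <;>
    simp [bracketTable, lie_self, hanti (e 1) (e 0), hanti (e 2) (e 0), hanti (e 2) (e 1),
      hanti (e 3) (e 0), hanti (e 3) (e 1), hanti (e 3) (e 2), h12, h13, h14, h23, h24, h34]

theorem nabla_basis_eq_connectionTable (e : Basis (Fin 4) ℝ G)
    (lie nabla : G →ₗ[ℝ] G →ₗ[ℝ] G) (g : G →ₗ[ℝ] G →ₗ[ℝ] ℝ) (A B : ℝ)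
    (hlie : ∀ i j, lie (e i) (e j) = bracketTable A B e i j)
    (hg : ∀ i j : Fin 4, g (e i) (e j) = if i = j then lorentzSign i else 0)
    (hK : ∀ X Y Z : G, 2 * g (nabla X Y) Z = g (lie X Y) Z - g (lie Y Z) X + g (lie Z X) Y)
    (i j : Fin 4) :
    nabla (e i) (e j) = connectionTable A B e i j := by
  refine e.eq_of_koszul_formula g lorentzSign_ne_zero hg lie nabla hK fun k => ?_
  fin_cases i <;> fin_cases j <;> fin_cases k <;>
    simp [hlie, bracketTable, connectionTable, hg, lorentzSign] <;> ring

theorem roughLaplacian_smul_add_eq (e : Fin 4 → G) (nabla : G →ₗ[ℝ] G →ₗ[ℝ] G) (A B b : ℝ)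
    (hnabla : ∀ i j, nabla (e i) (e j) = connectionTable A B e i j) :
    roughLaplacian lorentzSign e nabla (b • (e 1 + e 2)) =
      (b * (B ^ 2 - 3 * A * B - A ^ 2)) • (e 1 + e 2) := by
  simp only [roughLaplacian, lorentzSign, Fin.isValue, smul_add, map_add, map_smul, hnabla,
    connectionTable, Matrix.cons_val', Matrix.cons_val_one, Matrix.cons_val_zero,
    Matrix.cons_val_fin_one, Matrix.cons_val, ite_smul, neg_smul, one_smul, neg_sub,
    Fin.sum_univ_four, Fin.reduceEq, ↓reduceIte, map_zero, smul_zero, add_zero, map_neg,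
    LinearMap.neg_apply, LinearMap.smul_apply, smul_neg, neg_neg, zero_sub, neg_add_rev, zero_add,
    LinearMap.zero_apply, sub_zero]
  module

theorem curvatureTrace_smul_add_eq_zero (e : Fin 4 → G) (lie nabla : G →ₗ[ℝ] G →ₗ[ℝ] G)
    (A B b : ℝ)
    (hlie : ∀ i j, lie (e i) (e j) = bracketTable A B e i j)
    (hnabla : ∀ i j, nabla (e i) (e j) = connectionTable A B e i j) :
    curvatureTrace lorentzSign e lie nabla (b • (e 1 + e 2)) = 0 := by
  simp [curvatureTrace, Fin.sum_univ_four, lorentzSign, hnabla, hlie, connectionTable,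
    bracketTable]

end LorentzianExample

theorem stmt_13_general {G : Type*} [AddCommGroup G] [Module ℝ G]
    (e : Module.Basis (Fin 4) ℝ G)
    (lie : G →ₗ[ℝ] G →ₗ[ℝ] G)
    (g : G →ₗ[ℝ] G →ₗ[ℝ] ℝ)
    (nabla : G →ₗ[ℝ] G →ₗ[ℝ] G)
    (A B b : ℝ) (hb : b ≠ 0)
    (hanti : ∀ X Y : G, lie X Y = - lie Y X)
    (h12 : lie (e 0) (e 1) = 0)
    (h13 : lie (e 0) (e 2) = 0)
    (h14 : lie (e 0) (e 3) = A • e 0)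
    (h23 : lie (e 1) (e 2) = 0)
    (h24 : lie (e 1) (e 3) = A • e 1 + B • e 2)
    (h34 : lie (e 2) (e 3) = B • e 1 + A • e 2)
    (hg : ∀ i j : Fin 4, g (e i) (e j) = if i = j then (if i = 2 then (-1 : ℝ) else 1) else 0)
    (hK : ∀ X Y Z : G, 2 * g (nabla X Y) Z = g (lie X Y) Z - g (lie Y Z) X + g (lie Z X) Y) :
    (let eps : Fin 4 → ℝ := fun i => if i = (2 : Fin 4) then (-1 : ℝ) else 1
     let lap : G → G := fun V : G => ∑ i : Fin 4, eps i • (nabla (e i) (nabla (e i) V) - nabla (nabla (e i) (e i)) V)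
     let tr : G → G := fun V : G => ∑ i : Fin 4, eps i • (nabla (lie (nabla (e i) V) V) (e i) - nabla (nabla (e i) V) (nabla V (e i)) + nabla V (nabla (nabla (e i) V) (e i)))
     let V : G := b • (e 1 + e 2)
     (lap V = 0 ∧ tr V = 0) ↔
       (A = ((-3 + Real.sqrt 13) / 2) * B ∨ A = ((-3 - Real.sqrt 13) / 2) * B)) := by
  intro eps lap tr V
  have hlie := lie_basis_eq_bracketTable e lie A B hanti h12 h13 h14 h23 h24 h34
  have hnabla := nabla_basis_eq_connectionTable e lie nabla g A B hlie hg hK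
  have hV : e 1 + e 2 ≠ 0 := fun h => by
    simpa [Finsupp.single_apply] using congrArg (fun x => e.repr x 1) h
  change roughLaplacian lorentzSign e nabla V = 0 ∧
    curvatureTrace lorentzSign e lie nabla V = 0 ↔ _
  rw [roughLaplacian_smul_add_eq e nabla A B b hnabla,
    curvatureTrace_smul_add_eq_zero e lie nabla A B b hlie hnabla,
    eq_self_iff_true, and_true, smul_eq_zero, or_iff_left hV, mul_eq_zero, or_iff_right hb,
    sq_sub_three_mul_sub_sq_eq_zero_iff]

theorem stmt_13 {G : Type*} [AddCommGroup G] [Module ℝ G]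
    (e : Module.Basis (Fin 4) ℝ G)
    (lie : G →ₗ[ℝ] G →ₗ[ℝ] G)
    (g : G →ₗ[ℝ] G →ₗ[ℝ] ℝ)
    (nabla : G →ₗ[ℝ] G →ₗ[ℝ] G)
    (A B b : ℝ) (hb : b ≠ 0)
    (hanti : ∀ X Y : G, lie X Y = - lie Y X)
    (h12 : lie (e 0) (e 1) = 0)
    (h13 : lie (e 0) (e 2) = 0)
    (h14 : lie (e 0) (e 3) = A • e 0)
    (h23 : lie (e 1) (e 2) = 0)
    (h24 : lie (e 1) (e 3) = A • e 1 + B • e 2)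
    (h34 : lie (e 2) (e 3) = B • e 1 + A • e 2)
    (hg : ∀ i j : Fin 4, g (e i) (e j) = if i = j then (if i = 2 then (-1 : ℝ) else 1) else 0)
    (hgsymm : ∀ X Y : G, g X Y = g Y X)
    (hK : ∀ X Y Z : G, 2 * g (nabla X Y) Z = g (lie X Y) Z - g (lie Y Z) X + g (lie Z X) Y) :
    (let eps : Fin 4 → ℝ := fun i => if i = (2 : Fin 4) then (-1 : ℝ) else 1
     let lap : G → G := fun V : G => ∑ i : Fin 4, eps i • (nabla (e i) (nabla (e i) V) - nabla (nabla (e i) (e i)) V)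
     let tr : G → G := fun V : G => ∑ i : Fin 4, eps i • (nabla (lie (nabla (e i) V) V) (e i) - nabla (nabla (e i) V) (nabla V (e i)) + nabla V (nabla (nabla (e i) V) (e i)))
     let V : G := b • (e 1 + e 2)
     (lap V = 0 ∧ tr V = 0) ↔
       (A = ((-3 + Real.sqrt 13) / 2) * B ∨ A = ((-3 - Real.sqrt 13) / 2) * B)) :=
  stmt_13_general e lie g nabla A B b hb hanti h12 h13 h14 h23 h24 h34 hg hK
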